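/- arXiv:2505.21666 — 2 statements merged into one kernel-verified Lean document; each statement's English description precedes it below -/
import Mathlib

section
/- Let F : ℝ^d → ℝ be twice continuously differentiable with sup_x ‖∇F(x)‖ < ∞, and let p : ℝ^d → ℝ be a continuously differentiable, strictly positive probability density. Assume the functions x ↦ F(x)², x ↦ (ΔF(x))², x ↦ ‖∇ log p(x)‖² and x ↦ ‖∇F(x)‖² are integrable with respect to p(x)dx, that F·(ΔF)·p and F·⟨∇F, ∇log p⟩·p are integrable, and that for each coordinate i and each fixed value of the remaining coordinates, F(x)·(∂F/∂x_i)(x)·p(x) → 0 as x_i → ±∞. Then ∫ ‖∇F(x)‖² p(x) dx ≤ ( sqrt(∫ (ΔF(x))² p(x) dx) + (sup_x ‖∇F(x)‖)·sqrt(∫ ‖∇ log p(x)‖² p(x) dx) ) · sqrt(∫ F(x)² p(x) dx). -/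
open MeasureTheory Filter

/-- The Laplacian `ΔF(x) = Σ_i ∂²F/∂x_i²(x)` of `F : ℝ^d → ℝ`. -/
noncomputable def laplacian {d : ℕ} (F : EuclideanSpace ℝ (Fin d) → ℝ)
    (x : EuclideanSpace ℝ (Fin d)) : ℝ :=
  ∑ i, fderiv ℝ (fun y => fderiv ℝ F y (EuclideanSpace.single i 1)) x
    (EuclideanSpace.single i 1)

/-- The measure `p(x)dx` on `ℝ^d` associated with a density `p`. -/
noncomputable def densMeasure {d : ℕ} (p : EuclideanSpace ℝ (Fin d) → ℝ) :
    Measure (EuclideanSpace ℝ (Fin d)) :=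
  MeasureTheory.volume.withDensity fun x => ENNReal.ofReal (p x)

open Topology InnerProductSpace

/-! Under `μ = p dx`, the vector field `p F ∇F` has divergence
`p (‖∇F‖² + F ΔF + F ⟪∇F, ∇log p⟫)`. Both the field (it is bounded by `sup ‖∇F‖ · |F| p`, and
`F ∈ L²(μ) ⊆ L¹(μ)`) and its divergence are Lebesgue integrable, so the divergence integrates to
zero: pair it with the cut-offs `φ (x / R)`, whose gradients are `O(1 / R)`, and let `R → ∞`.
Hence `∫ ‖∇F‖² dμ = -∫ F ΔF dμ - ∫ F ⟪∇F, ∇log p⟫ dμ`, and Cauchy–Schwarz bounds the two terms,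
using `|⟪∇F, ∇log p⟫| ≤ sup ‖∇F‖ · ‖∇log p‖` in the second. -/

section Divergence

variable {E : Type*} [NormedAddCommGroup E] [NormedSpace ℝ E] [MeasurableSpace E]
  [BorelSpace E] {μ : Measure E}

theorem tendsto_integral_comp_inv_smul_mul {φ : E → ℝ} (hφ : Continuous φ)
    (hφ_le : ∀ x, |φ x| ≤ 1) (hφ_zero : φ 0 = 1) {g : E → ℝ} (hg : Integrable g μ) :
    Tendsto (fun R : ℝ => ∫ x, φ (R⁻¹ • x) * g x ∂μ) atTop (𝓝 (∫ x, g x ∂μ)) := by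
  refine tendsto_integral_filter_of_dominated_convergence (fun x => ‖g x‖)
    (Eventually.of_forall fun R =>
      ((hφ.comp (continuous_const_smul R⁻¹)).aestronglyMeasurable).mul hg.aestronglyMeasurable)
    (Eventually.of_forall fun R => Eventually.of_forall fun x => ?_) hg.norm
    (ae_of_all _ fun x => ?_)
  · rw [norm_mul, Real.norm_eq_abs]
    exact mul_le_of_le_one_left (norm_nonneg _) (hφ_le _)
  · have h : Tendsto (fun R : ℝ => R⁻¹ • x) atTop (𝓝 0) := by
      simpa using (tendsto_inv_atTop_zero (𝕜 := ℝ)).smul_const x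
    have := ((hφ.tendsto 0).comp h).mul_const (g x)
    rwa [hφ_zero, one_mul] at this

variable [FiniteDimensional ℝ E] [μ.IsAddHaarMeasure] {ι : Type*} [Fintype ι]

theorem integral_mul_sum_fderiv_eq_neg {χ : E → ℝ} (hχ : ContDiff ℝ 1 χ)
    (hχ_supp : HasCompactSupport χ) {f : ι → E → ℝ} (v : ι → E)
    (hf : ∀ i, ContDiff ℝ 1 (f i)) (hf_int : ∀ i, Integrable (f i) μ) :
    ∫ x, χ x * ∑ i, fderiv ℝ (f i) x (v i) ∂μ =
      -∑ i, ∫ x, fderiv ℝ χ x (v i) * f i x ∂μ := by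
  have hχ' : ∀ w, Continuous fun x => fderiv ℝ χ x w :=
    fun w => (hχ.continuous_fderiv one_ne_zero).clm_apply continuous_const
  have hf' : ∀ i, Continuous fun x => fderiv ℝ (f i) x (v i) :=
    fun i => ((hf i).continuous_fderiv one_ne_zero).clm_apply continuous_const
  have hχf' : ∀ i, Integrable (fun x => χ x * fderiv ℝ (f i) x (v i)) μ := fun i =>
    (hχ.continuous.mul (hf' i)).integrable_of_hasCompactSupport hχ_supp.mul_right
  simp_rw [Finset.mul_sum]
  rw [integral_finsetSum _ fun i _ => hχf' i, ← Finset.sum_neg_distrib]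
  refine Finset.sum_congr rfl fun i _ => ?_
  obtain ⟨C, hC⟩ := (hχ' (v i)).bounded_above_of_compact_support (hχ_supp.fderiv_apply ℝ (v i))
  obtain ⟨C', hC'⟩ := hχ.continuous.bounded_above_of_compact_support hχ_supp
  exact integral_mul_fderiv_eq_neg_fderiv_mul_of_integrable
    ((hf_int i).bdd_mul (hχ' (v i)).aestronglyMeasurable (Eventually.of_forall hC))
    (hχf' i)
    ((hf_int i).bdd_mul hχ.continuous.aestronglyMeasurable (Eventually.of_forall hC'))
    (fun x _ => hχ.differentiable one_ne_zero x) (fun x _ => (hf i).differentiable one_ne_zero x)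

theorem integral_sum_fderiv_eq_zero {f : ι → E → ℝ} (v : ι → E)
    (hf : ∀ i, ContDiff ℝ 1 (f i)) (hf_int : ∀ i, Integrable (f i) μ)
    (hdiv : Integrable (fun x => ∑ i, fderiv ℝ (f i) x (v i)) μ) :
    ∫ x, ∑ i, fderiv ℝ (f i) x (v i) ∂μ = 0 := by
  obtain ⟨φ, -, hφ_supp, hφ, hφ_range, hφ_zero⟩ :=
    exists_contDiff_tsupport_subset (n := 1) (Filter.univ_mem (f := 𝓝 (0 : E)))
  obtain ⟨C, hC⟩ := (hφ.continuous_fderiv one_ne_zero).bounded_above_of_compact_support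
    (hφ_supp.fderiv (𝕜 := ℝ))
  have hφ_le : ∀ x, |φ x| ≤ 1 := fun x => by
    obtain ⟨h0, h1⟩ := hφ_range (Set.mem_range_self x)
    exact abs_le.2 ⟨by linarith, h1⟩
  set K := ∑ i, C * ‖v i‖ * ∫ x, |f i x| ∂μ
  have hsmall : ∀ R : ℝ, 0 < R →
      ‖∫ x, φ (R⁻¹ • x) * ∑ i, fderiv ℝ (f i) x (v i) ∂μ‖ ≤ R⁻¹ * K := by
    intro R hR
    rw [integral_mul_sum_fderiv_eq_neg (χ := fun x => φ (R⁻¹ • x))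
      (hφ.comp (contDiff_const_smul R⁻¹)) (hφ_supp.comp_smul (inv_ne_zero hR.ne')) v hf hf_int,
      norm_neg, Finset.mul_sum]
    refine (norm_sum_le _ _).trans (Finset.sum_le_sum fun i _ => ?_)
    refine (norm_integral_le_integral_norm _).trans ?_
    rw [← mul_assoc, ← integral_const_mul]
    refine integral_mono_of_nonneg (ae_of_all _ fun _ => norm_nonneg (E := ℝ) _)
      (((hf_int i).abs).const_mul _) (ae_of_all _ fun x => ?_)
    have hφ' : |fderiv ℝ φ (R⁻¹ • x) (v i)| ≤ C * ‖v i‖ :=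
      ((fderiv ℝ φ _).le_opNorm _).trans (mul_le_mul_of_nonneg_right (hC _) (norm_nonneg _))
    dsimp only
    rw [fderiv_comp_smul]
    simp only [FunLike.coe_smul, Pi.smul_apply, smul_eq_mul, norm_mul, Real.norm_eq_abs,
      abs_inv, abs_of_pos hR]
    gcongr
  have hzero : Tendsto (fun R : ℝ => ∫ x, φ (R⁻¹ • x) * ∑ i, fderiv ℝ (f i) x (v i) ∂μ)
      atTop (𝓝 0) := by
    refine squeeze_zero_norm' ((eventually_gt_atTop 0).mono hsmall) ?_
    simpa using (tendsto_inv_atTop_zero (𝕜 := ℝ)).mul_const K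
  exact tendsto_nhds_unique (tendsto_integral_comp_inv_smul_mul hφ.continuous hφ_le hφ_zero hdiv)
    hzero

end Divergence

theorem abs_integral_mul_le_sqrt_mul_sqrt {α : Type*} [MeasurableSpace α] {μ : Measure α}
    {f g : α → ℝ} (hf : MemLp f 2 μ) (hg : MemLp g 2 μ) :
    |∫ x, f x * g x ∂μ| ≤ √(∫ x, f x ^ 2 ∂μ) * √(∫ x, g x ^ 2 ∂μ) := by
  have h2 : ENNReal.ofReal 2 = 2 := by norm_num
  have holder := integral_mul_le_Lp_mul_Lq_of_nonneg Real.HolderConjugate.two_two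
    (ae_of_all _ fun x => abs_nonneg (f x)) (ae_of_all _ fun x => abs_nonneg (g x))
    (h2 ▸ hf.abs) (h2 ▸ hg.abs)
  simp only [Real.rpow_two, sq_abs, ← Real.sqrt_eq_rpow] at holder
  calc |∫ x, f x * g x ∂μ| ≤ ∫ x, |f x| * |g x| ∂μ := by
        simpa only [abs_mul] using abs_integral_le_integral_abs (f := fun x => f x * g x)
    _ ≤ _ := holder

theorem abs_integral_mul_inner_le {α E : Type*} [MeasurableSpace α] {μ : Measure α}
    [NormedAddCommGroup E] [InnerProductSpace ℝ E] {f : α → ℝ} {u w : α → E} {M : ℝ}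
    (hM : 0 ≤ M) (hu : ∀ x, ‖u x‖ ≤ M) (hf : MemLp f 2 μ) (hw : MemLp w 2 μ)
    (hfuw : Integrable (fun x => f x * ⟪u x, w x⟫_ℝ) μ) :
    |∫ x, f x * ⟪u x, w x⟫_ℝ ∂μ| ≤ M * (√(∫ x, f x ^ 2 ∂μ) * √(∫ x, ‖w x‖ ^ 2 ∂μ)) := by
  have hfw : Integrable (fun x => |f x| * ‖w x‖) μ := hf.abs.integrable_mul hw.norm
  calc |∫ x, f x * ⟪u x, w x⟫_ℝ ∂μ| ≤ ∫ x, |f x * ⟪u x, w x⟫_ℝ| ∂μ :=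
        abs_integral_le_integral_abs
    _ ≤ ∫ x, M * (|f x| * ‖w x‖) ∂μ := by
        refine integral_mono hfuw.abs (hfw.const_mul M) fun x => ?_
        rw [abs_mul, mul_left_comm]
        gcongr
        exact (abs_real_inner_le_norm _ _).trans
          (mul_le_mul_of_nonneg_right (hu x) (norm_nonneg _))
    _ = M * ∫ x, |f x| * ‖w x‖ ∂μ := integral_const_mul _ _
    _ ≤ M * (√(∫ x, f x ^ 2 ∂μ) * √(∫ x, ‖w x‖ ^ 2 ∂μ)) := by
        gcongr
        simpa only [Pi.abs_apply, sq_abs] using (le_abs_self _).trans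
          (abs_integral_mul_le_sqrt_mul_sqrt hf.abs hw.norm)

theorem fderiv_mul_mul_fderiv_apply {E : Type*} [NormedAddCommGroup E] [NormedSpace ℝ E]
    {p F : E → ℝ} {x : E} (v : E)
    (hp : DifferentiableAt ℝ p x) (hF : DifferentiableAt ℝ F x)
    (hF' : DifferentiableAt ℝ (fun y => fderiv ℝ F y v) x) :
    fderiv ℝ (fun y => p y * (F y * fderiv ℝ F y v)) x v =
      p x * (fderiv ℝ F x v ^ 2 + F x * fderiv ℝ (fun y => fderiv ℝ F y v) x v) +
        F x * (fderiv ℝ F x v * fderiv ℝ p x v) := by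
  rw [fderiv_fun_mul hp (hF.fun_mul hF'), fderiv_fun_mul hF hF']
  simp only [add_apply, FunLike.coe_smul, Pi.smul_apply, smul_eq_mul]
  ring

section Gradient

variable {E : Type*} [NormedAddCommGroup E] [InnerProductSpace ℝ E] [CompleteSpace E]

theorem fderiv_apply_eq_inner_gradient (f : E → ℝ) (x v : E) :
    fderiv ℝ f x v = ⟪gradient f x, v⟫_ℝ :=
  (toDual_symm_apply (𝕜 := ℝ)).symm

theorem OrthonormalBasis.sum_fderiv_mul_fderiv {ι : Type*} [Fintype ι]
    (b : OrthonormalBasis ι ℝ E) (f g : E → ℝ) (x : E) :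
    ∑ i, fderiv ℝ f x (b i) * fderiv ℝ g x (b i) = ⟪gradient f x, gradient g x⟫_ℝ := by
  rw [← b.sum_inner_mul_inner]
  refine Finset.sum_congr rfl fun i _ => ?_
  rw [fderiv_apply_eq_inner_gradient, fderiv_apply_eq_inner_gradient,
    real_inner_comm (b i) (gradient g x)]

theorem gradient_log {p : E → ℝ} {x : E} (hp : DifferentiableAt ℝ p x) (hpx : p x ≠ 0) :
    gradient (fun y => Real.log (p y)) x = (p x)⁻¹ • gradient p x := by
  rw [gradient, fderiv.log hp hpx, map_smul, gradient]

end Gradient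

section Euclidean

variable {d : ℕ}

theorem measurable_laplacian (F : EuclideanSpace ℝ (Fin d) → ℝ) : Measurable (laplacian F) :=
  Finset.measurable_sum _ fun _ _ => measurable_fderiv_apply_const ℝ _ _

theorem measurable_gradient (f : EuclideanSpace ℝ (Fin d) → ℝ) : Measurable (gradient f) :=
  (toDual ℝ _).symm.continuous.measurable.comp (measurable_fderiv ℝ f)

theorem integral_densMeasure {p : EuclideanSpace ℝ (Fin d) → ℝ} (hp : Measurable p)
    (hp0 : ∀ x, 0 ≤ p x) (f : EuclideanSpace ℝ (Fin d) → ℝ) :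
    ∫ x, f x ∂densMeasure p = ∫ x, p x * f x := by
  rw [densMeasure, integral_withDensity_eq_integral_toReal_smul hp.ennreal_ofReal
    (ae_of_all _ fun _ => ENNReal.ofReal_lt_top)]
  simp_rw [ENNReal.toReal_ofReal (hp0 _), smul_eq_mul]

theorem integrable_densMeasure_iff {p : EuclideanSpace ℝ (Fin d) → ℝ} (hp : Measurable p)
    (hp0 : ∀ x, 0 ≤ p x) {f : EuclideanSpace ℝ (Fin d) → ℝ} :
    Integrable f (densMeasure p) ↔ Integrable (fun x => p x * f x) := by
  rw [densMeasure, integrable_withDensity_iff_integrable_smul' hp.ennreal_ofReal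
    (ae_of_all _ fun _ => ENNReal.ofReal_lt_top)]
  simp_rw [ENNReal.toReal_ofReal (hp0 _), smul_eq_mul]

theorem isFiniteMeasure_densMeasure {p : EuclideanSpace ℝ (Fin d) → ℝ} (hp : Integrable p) :
    IsFiniteMeasure (densMeasure p) :=
  isFiniteMeasure_withDensity_ofReal hp.hasFiniteIntegral

theorem laplacian_eq_sum_basisFun (F : EuclideanSpace ℝ (Fin d) → ℝ) (x) :
    laplacian F x = ∑ i, fderiv ℝ (fun y => fderiv ℝ F y (EuclideanSpace.basisFun (Fin d) ℝ i)) x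
      (EuclideanSpace.basisFun (Fin d) ℝ i) := by
  simp only [laplacian, EuclideanSpace.basisFun_apply]

theorem sum_fderiv_mul_mul_fderiv_basisFun {F p : EuclideanSpace ℝ (Fin d) → ℝ}
    (hF : ContDiff ℝ 2 F) (hp : Differentiable ℝ p) (hppos : ∀ x, 0 < p x)
    (x : EuclideanSpace ℝ (Fin d)) :
    ∑ i, fderiv ℝ (fun y => p y * (F y * fderiv ℝ F y (EuclideanSpace.basisFun (Fin d) ℝ i))) x
        (EuclideanSpace.basisFun (Fin d) ℝ i) =
      p x * (‖gradient F x‖ ^ 2 + F x * laplacian F x +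
        F x * ⟪gradient F x, gradient (fun y => Real.log (p y)) x⟫_ℝ) := by
  set b := EuclideanSpace.basisFun (Fin d) ℝ
  have hF' : ∀ v, Differentiable ℝ fun y => fderiv ℝ F y v := fun v =>
    ((hF.fderiv_right (m := 1) (by norm_num)).clm_apply contDiff_const).differentiable
      one_ne_zero
  rw [Finset.sum_congr rfl fun i _ => fderiv_mul_mul_fderiv_apply (b i) (hp x)
    (hF.differentiable (by norm_num) x) (hF' _ x)]
  have hgrad : ∑ i, fderiv ℝ F x (b i) ^ 2 = ‖gradient F x‖ ^ 2 := by
    simpa only [sq, real_inner_self_eq_norm_sq] using b.sum_fderiv_mul_fderiv F F x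
  have hscore : ∑ i, fderiv ℝ F x (b i) * fderiv ℝ p x (b i) =
      p x * ⟪gradient F x, gradient (fun y => Real.log (p y)) x⟫_ℝ := by
    rw [b.sum_fderiv_mul_fderiv, gradient_log (hp x) (hppos x).ne', inner_smul_right,
      mul_inv_cancel_left₀ (hppos x).ne']
  rw [Finset.sum_add_distrib, ← Finset.mul_sum, ← Finset.mul_sum, Finset.sum_add_distrib,
    ← Finset.mul_sum, hgrad, hscore, laplacian_eq_sum_basisFun]
  ring

theorem integral_norm_sq_gradient_densMeasure {F p : EuclideanSpace ℝ (Fin d) → ℝ}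
    (hF : ContDiff ℝ 2 F) (hp : ContDiff ℝ 1 p) (hppos : ∀ x, 0 < p x) (hp_int : Integrable p)
    {M : ℝ} (hM : ∀ x, ‖gradient F x‖ ≤ M)
    (hint_F2 : Integrable (fun x => F x ^ 2) (densMeasure p))
    (hint_grad2 : Integrable (fun x => ‖gradient F x‖ ^ 2) (densMeasure p))
    (hint_Flap : Integrable (fun x => F x * laplacian F x) (densMeasure p))
    (hint_Fscore : Integrable
      (fun x => F x * ⟪gradient F x, gradient (fun y => Real.log (p y)) x⟫_ℝ) (densMeasure p)) :
    ∫ x, ‖gradient F x‖ ^ 2 ∂densMeasure p =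
      -(∫ x, F x * laplacian F x ∂densMeasure p +
        ∫ x, F x * ⟪gradient F x, gradient (fun y => Real.log (p y)) x⟫_ℝ ∂densMeasure p) := by
  set b := EuclideanSpace.basisFun (Fin d) ℝ
  have hpm : Measurable p := hp.continuous.measurable
  have hp0 : ∀ x, 0 ≤ p x := fun x => (hppos x).le
  have : IsFiniteMeasure (densMeasure p) := isFiniteMeasure_densMeasure hp_int
  have hF_int : Integrable F (densMeasure p) :=
    ((memLp_two_iff_integrable_sq hF.continuous.aestronglyMeasurable).2 hint_F2).integrable
      one_le_two
  have hF' : ∀ v, ContDiff ℝ 1 fun y => fderiv ℝ F y v := fun v =>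
    (hF.fderiv_right (m := 1) (by norm_num)).clm_apply contDiff_const
  have hflux_int : ∀ i, Integrable (fun y => p y * (F y * fderiv ℝ F y (b i))) := fun i =>
    (integrable_densMeasure_iff hpm hp0).1 <|
      hF_int.mul_bdd (hF' _).continuous.aestronglyMeasurable (ae_of_all _ fun y => by
        rw [fderiv_apply_eq_inner_gradient]
        exact (abs_real_inner_le_norm _ _).trans (by simpa using hM y))
  have hdiv_eq : (fun x => ∑ i, fderiv ℝ (fun y => p y * (F y * fderiv ℝ F y (b i))) x (b i)) =
      fun x => p x * (‖gradient F x‖ ^ 2 + F x * laplacian F x +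
        F x * ⟪gradient F x, gradient (fun y => Real.log (p y)) x⟫_ℝ) :=
    funext (sum_fderiv_mul_mul_fderiv_basisFun hF (hp.differentiable one_ne_zero) hppos)
  have hdiv := integral_sum_fderiv_eq_zero (μ := volume) (fun i => b i)
    (fun i => hp.mul ((hF.of_le (by norm_num)).mul (hF' _))) hflux_int
    (hdiv_eq ▸ (integrable_densMeasure_iff hpm hp0).1
      ((hint_grad2.fun_add hint_Flap).fun_add hint_Fscore))
  rw [hdiv_eq, ← integral_densMeasure hpm hp0,
    integral_add (hint_grad2.fun_add hint_Flap) hint_Fscore, integral_add hint_grad2 hint_Flap]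
    at hdiv
  linarith

end Euclidean

theorem gradient_sq_integral_bound_general {d : ℕ}
    (F p : EuclideanSpace ℝ (Fin d) → ℝ)
    (hF : ContDiff ℝ 2 F)
    (hFgradBdd : BddAbove (Set.range fun x => ‖gradient F x‖))
    (hp : ContDiff ℝ 1 p) (hppos : ∀ x, 0 < p x)
    (hpdens : ∫ x, p x = 1)
    (hint_F2 : Integrable (fun x => (F x) ^ 2) (densMeasure p))
    (hint_lap2 : Integrable (fun x => (laplacian F x) ^ 2) (densMeasure p))
    (hint_score2 :
      Integrable (fun x => ‖gradient (fun y => Real.log (p y)) x‖ ^ 2) (densMeasure p))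
    (hint_grad2 : Integrable (fun x => ‖gradient F x‖ ^ 2) (densMeasure p))
    (hint_Flap : Integrable (fun x => F x * laplacian F x) (densMeasure p))
    (hint_Fscore : Integrable
      (fun x => F x * (inner ℝ (gradient F x) (gradient (fun y => Real.log (p y)) x) : ℝ))
      (densMeasure p)) :
    ∫ x, ‖gradient F x‖ ^ 2 ∂(densMeasure p) ≤
      (Real.sqrt (∫ x, (laplacian F x) ^ 2 ∂(densMeasure p)) +
          (⨆ x, ‖gradient F x‖) *
            Real.sqrt (∫ x, ‖gradient (fun y => Real.log (p y)) x‖ ^ 2 ∂(densMeasure p))) *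
        Real.sqrt (∫ x, (F x) ^ 2 ∂(densMeasure p)) := by
  have hp_int : Integrable p := .of_integral_ne_zero (by rw [hpdens]; exact one_ne_zero)
  have hM : ∀ x, ‖gradient F x‖ ≤ ⨆ y, ‖gradient F y‖ := le_ciSup hFgradBdd
  have hFm : MemLp F 2 (densMeasure p) :=
    (memLp_two_iff_integrable_sq hF.continuous.aestronglyMeasurable).2 hint_F2
  have hlap := abs_integral_mul_le_sqrt_mul_sqrt hFm
    ((memLp_two_iff_integrable_sq (measurable_laplacian F).aestronglyMeasurable).2 hint_lap2)
  have hscore := abs_integral_mul_inner_le (Real.iSup_nonneg fun x => norm_nonneg _) hM hFm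
    ((memLp_two_iff_integrable_sq_norm (measurable_gradient _).aestronglyMeasurable).2
      hint_score2) hint_Fscore
  rw [integral_norm_sq_gradient_densMeasure hF hp hppos hp_int hM hint_F2 hint_grad2 hint_Flap
    hint_Fscore]
  linarith [(abs_le.1 hlap).1, (abs_le.1 hscore).1]

/-- integration-by-parts bound on the gradient norm.
For `F : ℝ^d → ℝ` twice continuously differentiable with bounded gradient and a `C¹`
strictly positive probability density `p`, under suitable integrability and vanishing-at-infinity
conditions,
`∫ ‖∇F‖² p ≤ ( √(∫ (ΔF)² p) + (sup_x ‖∇F(x)‖)·√(∫ ‖∇log p‖² p) ) · √(∫ F² p)`. -/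
theorem gradient_sq_integral_bound {d : ℕ}
    (F p : EuclideanSpace ℝ (Fin d) → ℝ)
    (hF : ContDiff ℝ 2 F)
    (hFgradBdd : BddAbove (Set.range fun x => ‖gradient F x‖))
    (hp : ContDiff ℝ 1 p) (hppos : ∀ x, 0 < p x)
    (hpdens : ∫ x, p x = 1)
    (hint_F2 : Integrable (fun x => (F x) ^ 2) (densMeasure p))
    (hint_lap2 : Integrable (fun x => (laplacian F x) ^ 2) (densMeasure p))
    (hint_score2 :
      Integrable (fun x => ‖gradient (fun y => Real.log (p y)) x‖ ^ 2) (densMeasure p))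
    (hint_grad2 : Integrable (fun x => ‖gradient F x‖ ^ 2) (densMeasure p))
    (hint_Flap : Integrable (fun x => F x * laplacian F x) (densMeasure p))
    (hint_Fscore : Integrable
      (fun x => F x * (inner ℝ (gradient F x) (gradient (fun y => Real.log (p y)) x) : ℝ))
      (densMeasure p))
    (hvanish : ∀ (i : Fin d) (x : EuclideanSpace ℝ (Fin d)),
      Tendsto (fun t : ℝ =>
          F (WithLp.toLp 2 (Function.update x i t)) *
            fderiv ℝ F (WithLp.toLp 2 (Function.update x i t)) (EuclideanSpace.single i 1) *
            p (WithLp.toLp 2 (Function.update x i t))) atTop (nhds 0) ∧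
      Tendsto (fun t : ℝ =>
          F (WithLp.toLp 2 (Function.update x i t)) *
            fderiv ℝ F (WithLp.toLp 2 (Function.update x i t)) (EuclideanSpace.single i 1) *
            p (WithLp.toLp 2 (Function.update x i t))) atBot (nhds 0)) :
    ∫ x, ‖gradient F x‖ ^ 2 ∂(densMeasure p) ≤
      (Real.sqrt (∫ x, (laplacian F x) ^ 2 ∂(densMeasure p)) +
          (⨆ x, ‖gradient F x‖) *
            Real.sqrt (∫ x, ‖gradient (fun y => Real.log (p y)) x‖ ^ 2 ∂(densMeasure p))) *
        Real.sqrt (∫ x, (F x) ^ 2 ∂(densMeasure p)) :=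
  gradient_sq_integral_bound_general F p hF hFgradBdd hp hppos hpdens hint_F2 hint_lap2 hint_score2
    hint_grad2 hint_Flap hint_Fscore
end

section
/- Let d ≥ 1, δ > 0, and let v̂, v* : ℝ^d → [0,1] be twice continuously differentiable functions whose Hessians satisfy sup_x ‖∇²v̂(x)‖_op ≤ M and sup_x ‖∇²v*(x)‖_op ≤ M. Let μ be a probability measure on ℝ^d such that all integrals below are finite. Then ∫ ‖∇v̂(x) − ∇v*(x)‖² dμ(x) ≤ (3/2)·d²·δ²·M² + (3d²/δ²)·sqrt( ∫∫ ( v̂(x + δu) − v*(x + δu) )² dσ(u) dμ(x) ), where σ denotes the uniform probability measure on the unit sphere S^{d−1}. -/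
/-!
The spherical-smoothing estimator `ĝf(x) = (d/δ) ∫ f(x + δu) u dσ(u)` recovers `∇f(x)` up to
`dδM/2`: isometry invariance of `σ` gives `∫ u dσ = 0` and `d ∫ ⟪w, u⟫ u dσ = w`, so only the
second-order Taylor remainder of `f` survives. The estimator is linear in `f` and
`‖ĝf(x)‖ ≤ (d/δ) ∫ |f(x + δu)| dσ`, so the triangle inequality, `(a + b + c)² ≤ 3(a² + b² + c²)`
and Jensen bound `‖∇v̂ − ∇v*‖²` pointwise by `(3/2)d²δ²M² + (3d²/δ²) ∫ (v̂ − v*)²(x + δu) dσ`.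
After integrating over `μ`, the double integral lies in `[0, 1]` because `v̂, v*` take values in
`[0, 1]`, so it is at most its square root.
-/

open MeasureTheory RealInnerProductSpace

section Taylor

variable {E F : Type*} [NormedAddCommGroup E] [NormedSpace ℝ E]
  [NormedAddCommGroup F] [NormedSpace ℝ F]

theorem norm_fderiv_sub_le_of_norm_fderiv_fderiv_le {f : E → F} (hf : ContDiff ℝ 2 f) {M : ℝ}
    (hM : ∀ x, ‖fderiv ℝ (fderiv ℝ f) x‖ ≤ M) (a b : E) :
    ‖fderiv ℝ f a - fderiv ℝ f b‖ ≤ M * ‖a - b‖ :=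
  convex_univ.norm_image_sub_le_of_norm_fderiv_le
    (fun _ _ => ((hf.fderiv_right (m := 1) le_rfl).differentiable one_ne_zero).differentiableAt)
    (fun y _ => hM y) (Set.mem_univ b) (Set.mem_univ a)

theorem norm_image_add_sub_sub_fderiv_le {f : E → F} (hf : Differentiable ℝ f) {M : ℝ}
    (hM : ∀ a b, ‖fderiv ℝ f a - fderiv ℝ f b‖ ≤ M * ‖a - b‖) (x h : E) :
    ‖f (x + h) - f x - fderiv ℝ f x h‖ ≤ M / 2 * ‖h‖ ^ 2 := by
  set φ : ℝ → F := fun t => f (x + t • h) - f x - t • fderiv ℝ f x h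
  have hφ : ∀ t, HasDerivAt φ (fderiv ℝ f (x + t • h) h - fderiv ℝ f x h) t := fun t => by
    have hline : HasDerivAt (fun t : ℝ => x + t • h) h t := by
      simpa using ((hasDerivAt_id t).smul_const h).const_add x
    exact (((hf _).hasFDerivAt.comp_hasDerivAt t hline).sub_const (f x)).sub
      (by simpa using (hasDerivAt_id t).smul_const (fderiv ℝ f x h))
  have hbound : ∀ t ∈ Set.Ico (0 : ℝ) 1,
      ‖fderiv ℝ f (x + t • h) h - fderiv ℝ f x h‖ ≤ M * ‖h‖ ^ 2 * t := fun t ht =>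
    calc ‖fderiv ℝ f (x + t • h) h - fderiv ℝ f x h‖
        ≤ ‖fderiv ℝ f (x + t • h) - fderiv ℝ f x‖ * ‖h‖ :=
          (fderiv ℝ f (x + t • h) - fderiv ℝ f x).le_opNorm h
      _ ≤ M * ‖x + t • h - x‖ * ‖h‖ := by gcongr; exact hM _ _
      _ = M * ‖h‖ ^ 2 * t := by
          rw [add_sub_cancel_left, norm_smul, Real.norm_of_nonneg ht.1]; ring
  have hB : ∀ t : ℝ, HasDerivAt (fun t => M / 2 * ‖h‖ ^ 2 * t ^ 2) (M * ‖h‖ ^ 2 * t) t :=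
    fun t => ((hasDerivAt_pow 2 t).const_mul (M / 2 * ‖h‖ ^ 2)).congr_deriv (by ring)
  simpa [φ] using image_norm_le_of_norm_deriv_right_le_deriv_boundary
    (fun t _ => (hφ t).continuousAt.continuousWithinAt) (fun t _ => (hφ t).hasDerivWithinAt)
    (by simp [φ]) hB hbound (Set.right_mem_Icc.2 zero_le_one)

end Taylor

theorem Continuous.integrable_of_ae_norm_eq_one {E G : Type*} [NormedAddCommGroup E]
    [ProperSpace E] [MeasurableSpace E] [BorelSpace E] [NormedAddCommGroup G] {σ : Measure E}
    [IsFiniteMeasure σ] (hσ : ∀ᵐ u ∂σ, ‖u‖ = 1) {F : E → G} (hF : Continuous F) :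
    Integrable F σ := by
  have h := hF.continuousOn.integrableOn_compact (μ := σ) (isCompact_sphere (0 : E) 1)
  rwa [IntegrableOn, Measure.restrict_eq_self_of_ae_mem (by simpa using hσ)] at h

section IsometryInvariant

variable {E : Type*} [NormedAddCommGroup E] [NormedSpace ℝ E] [MeasurableSpace E] [BorelSpace E]
  {σ : Measure E}

theorem integral_comp_linearIsometryEquiv_of_map_eq {G : Type*} [NormedAddCommGroup G]
    [NormedSpace ℝ G] (L : E ≃ₗᵢ[ℝ] E) (hL : σ.map L = σ) (g : E → G) :
    ∫ u, g (L u) ∂σ = ∫ u, g u ∂σ :=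
  (MeasurePreserving.mk (μa := σ) (f := L.toHomeomorph.toMeasurableEquiv)
    L.continuous.measurable hL).integral_comp' g

theorem integral_id_eq_zero_of_map_neg (hσ : σ.map (LinearIsometryEquiv.neg ℝ) = σ) :
    ∫ u, u ∂σ = 0 := by
  have h : -∫ u, u ∂σ = ∫ u, u ∂σ :=
    (integral_neg id).symm.trans (integral_comp_linearIsometryEquiv_of_map_eq _ hσ id)
  have h2 : (2 : ℝ) • ∫ u, u ∂σ = 0 := by
    rw [two_smul]; nth_rewrite 1 [← h]; exact neg_add_cancel (∫ u, u ∂σ)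
  exact (smul_eq_zero.mp h2).resolve_left two_ne_zero

end IsometryInvariant

namespace EuclideanSpace

variable {ι : Type*} [Fintype ι] {σ : Measure (EuclideanSpace ℝ ι)}

theorem integral_apply_mul_apply_eq_zero
    (hσ_inv : ∀ L : EuclideanSpace ℝ ι ≃ₗᵢ[ℝ] EuclideanSpace ℝ ι, σ.map L = σ) {i j : ι}
    (hij : i ≠ j) : ∫ u, u i * u j ∂σ = 0 := by
  classical
  let L := LinearIsometryEquiv.piLpCongrRight 2
    fun k : ι => if k = i then LinearIsometryEquiv.neg ℝ else LinearIsometryEquiv.refl ℝ ℝ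
  have hL : ∀ u, (L u) i * (L u) j = -(u i * u j) := fun u => by
    simp [L, LinearIsometryEquiv.piLpCongrRight_apply, hij.symm]
  have h := integral_comp_linearIsometryEquiv_of_map_eq L (hσ_inv L) fun u => u i * u j
  simp only [hL, integral_neg] at h
  exact neg_eq_self.mp h

theorem integral_apply_sq_eq
    (hσ_inv : ∀ L : EuclideanSpace ℝ ι ≃ₗᵢ[ℝ] EuclideanSpace ℝ ι, σ.map L = σ) (i j : ι) :
    ∫ u, u i ^ 2 ∂σ = ∫ u, u j ^ 2 ∂σ := by
  classical
  let L := LinearIsometryEquiv.piLpCongrLeft 2 ℝ ℝ (Equiv.swap i j)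
  have hL : ∀ u : EuclideanSpace ℝ ι, (L u) i = u j := fun u => by
    simp [L, LinearIsometryEquiv.piLpCongrLeft_apply, Equiv.piCongrLeft'_apply]
  have h := integral_comp_linearIsometryEquiv_of_map_eq L (hσ_inv L) fun u => u i ^ 2
  simpa only [hL] using h.symm

theorem sum_integral_apply_sq [IsProbabilityMeasure σ] (hσ : ∀ᵐ u ∂σ, ‖u‖ = 1) :
    ∑ i, ∫ u, u i ^ 2 ∂σ = 1 := by
  rw [← integral_finsetSum _ fun i _ => Continuous.integrable_of_ae_norm_eq_one hσ (by fun_prop)]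
  have h : ∀ᵐ u ∂σ, ∑ i, u i ^ 2 = 1 := by
    filter_upwards [hσ] with u hu
    simpa [hu] using (EuclideanSpace.norm_sq_eq u).symm
  simp [integral_congr_ae h]

theorem card_mul_integral_apply_sq [IsProbabilityMeasure σ] (hσ : ∀ᵐ u ∂σ, ‖u‖ = 1)
    (hσ_inv : ∀ L : EuclideanSpace ℝ ι ≃ₗᵢ[ℝ] EuclideanSpace ℝ ι, σ.map L = σ) (i : ι) :
    (Fintype.card ι : ℝ) * ∫ u, u i ^ 2 ∂σ = 1 := by
  simpa [integral_apply_sq_eq hσ_inv _ i] using sum_integral_apply_sq hσ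

theorem card_smul_integral_inner_smul [IsProbabilityMeasure σ] (hσ : ∀ᵐ u ∂σ, ‖u‖ = 1)
    (hσ_inv : ∀ L : EuclideanSpace ℝ ι ≃ₗᵢ[ℝ] EuclideanSpace ℝ ι, σ.map L = σ)
    (w : EuclideanSpace ℝ ι) : (Fintype.card ι : ℝ) • ∫ u, ⟪w, u⟫ • u ∂σ = w := by
  classical
  ext j
  have hcoord : (∫ u, ⟪w, u⟫ • u ∂σ) j = ∑ i, w i * ∫ u, u i * u j ∂σ := by
    calc (∫ u, ⟪w, u⟫ • u ∂σ) j = ∫ u, ⟪w, u⟫ * u j ∂σ :=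
          ((EuclideanSpace.proj j).integral_comp_comm
            (Continuous.integrable_of_ae_norm_eq_one hσ
              (by fun_prop : Continuous fun u : EuclideanSpace ℝ ι => ⟪w, u⟫ • u))).symm
      _ = ∫ u, ∑ i, w i * (u i * u j) ∂σ := by
          simp only [PiLp.inner_apply, RCLike.inner_apply, conj_trivial, Finset.sum_mul]
          congr! 3 with u i; ring
      _ = ∑ i, w i * ∫ u, u i * u j ∂σ := by
          rw [integral_finsetSum _ fun i _ =>
            Continuous.integrable_of_ae_norm_eq_one hσ (by fun_prop)]
          simp only [integral_const_mul]
  rw [PiLp.smul_apply, hcoord, Finset.sum_eq_single j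
    (fun i _ hij => by rw [integral_apply_mul_apply_eq_zero hσ_inv hij, mul_zero])
    (by simp), smul_eq_mul, mul_left_comm]
  simp only [← sq, card_mul_integral_apply_sq hσ hσ_inv, mul_one]

end EuclideanSpace

theorem sq_integral_le_integral_sq {α : Type*} [MeasurableSpace α] {μ : Measure α}
    [IsProbabilityMeasure μ] {f : α → ℝ} (hf : Integrable f μ)
    (hf₂ : Integrable (fun x => f x ^ 2) μ) : (∫ x, f x ∂μ) ^ 2 ≤ ∫ x, f x ^ 2 ∂μ :=
  even_two.convexOn_pow.map_integral_le (continuous_pow 2).continuousOn isClosed_univ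
    (ae_of_all _ fun _ => Set.mem_univ _) hf hf₂

section SmoothedGradient

variable {ι : Type*} [Fintype ι] {σ : Measure (EuclideanSpace ℝ ι)}

noncomputable def smoothedGradient (σ : Measure (EuclideanSpace ℝ ι)) (δ : ℝ)
    (f : EuclideanSpace ℝ ι → ℝ) (x : EuclideanSpace ℝ ι) : EuclideanSpace ℝ ι :=
  (Fintype.card ι / δ) • ∫ u, f (x + δ • u) • u ∂σ

theorem norm_smoothedGradient_le (hσ : ∀ᵐ u ∂σ, ‖u‖ = 1) {δ : ℝ} (hδ : 0 ≤ δ)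
    (f : EuclideanSpace ℝ ι → ℝ) (x : EuclideanSpace ℝ ι) :
    ‖smoothedGradient σ δ f x‖ ≤ Fintype.card ι / δ * ∫ u, |f (x + δ • u)| ∂σ := by
  rw [smoothedGradient, norm_smul, Real.norm_of_nonneg (by positivity)]
  gcongr
  refine (norm_integral_le_integral_norm _).trans_eq (integral_congr_ae ?_)
  filter_upwards [hσ] with u hu
  rw [norm_smul, hu, mul_one, Real.norm_eq_abs]

theorem smoothedGradient_sub [IsFiniteMeasure σ] (hσ : ∀ᵐ u ∂σ, ‖u‖ = 1)
    {f₁ f₂ : EuclideanSpace ℝ ι → ℝ} (hf₁ : Continuous f₁) (hf₂ : Continuous f₂) (δ : ℝ)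
    (x : EuclideanSpace ℝ ι) :
    smoothedGradient σ δ (f₁ - f₂) x = smoothedGradient σ δ f₁ x - smoothedGradient σ δ f₂ x := by
  simp only [smoothedGradient, Pi.sub_apply, sub_smul, ← smul_sub]
  rw [integral_sub (Continuous.integrable_of_ae_norm_eq_one hσ (by fun_prop))
    (Continuous.integrable_of_ae_norm_eq_one hσ (by fun_prop))]

theorem norm_gradient_sub_smoothedGradient_le [IsProbabilityMeasure σ]
    (hσ : ∀ᵐ u ∂σ, ‖u‖ = 1)
    (hσ_inv : ∀ L : EuclideanSpace ℝ ι ≃ₗᵢ[ℝ] EuclideanSpace ℝ ι, σ.map L = σ)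
    {f : EuclideanSpace ℝ ι → ℝ} (hf : Differentiable ℝ f) {M : ℝ}
    (hM : ∀ a b, ‖fderiv ℝ f a - fderiv ℝ f b‖ ≤ M * ‖a - b‖) {δ : ℝ} (hδ : 0 < δ)
    (x : EuclideanSpace ℝ ι) :
    ‖gradient f x - smoothedGradient σ δ f x‖ ≤ Fintype.card ι * δ * M / 2 := by
  have hfc := hf.continuous
  set g := gradient f x
  set R : EuclideanSpace ℝ ι → ℝ := fun u => f (x + δ • u) - f x - fderiv ℝ f x (δ • u)
  have hsplit : ∀ u, f (x + δ • u) • u = (R u • u + f x • u) + δ • (⟪g, u⟫ • u) := fun u => by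
    simp only [R, g, inner_gradient_left, map_smul, smul_eq_mul]
    module
  have hR : ‖∫ u, R u • u ∂σ‖ ≤ M / 2 * δ ^ 2 := by
    refine (norm_integral_le_of_norm_le_const (C := M / 2 * δ ^ 2)
      (hσ.mono fun u hu => ?_)).trans_eq (by simp)
    calc ‖R u • u‖ = ‖f (x + δ • u) - f x - fderiv ℝ f x (δ • u)‖ := by
          rw [norm_smul, hu, mul_one]
      _ ≤ M / 2 * ‖δ • u‖ ^ 2 := norm_image_add_sub_sub_fderiv_le hf hM x (δ • u)
      _ = M / 2 * δ ^ 2 := by rw [norm_smul, hu, Real.norm_of_nonneg hδ.le, mul_one]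
  have hĝ : smoothedGradient σ δ f x = (Fintype.card ι / δ) • ∫ u, R u • u ∂σ + g := by
    have hint₁ : Integrable (fun u => R u • u) σ :=
      Continuous.integrable_of_ae_norm_eq_one hσ (by fun_prop)
    have hint₂ : Integrable (fun u => f x • u) σ :=
      Continuous.integrable_of_ae_norm_eq_one hσ (by fun_prop)
    have hint₃ : Integrable (fun u => δ • (⟪g, u⟫ • u)) σ :=
      Continuous.integrable_of_ae_norm_eq_one hσ (by fun_prop)
    rw [smoothedGradient, integral_congr_ae (ae_of_all _ hsplit),
      integral_add (f := fun u => R u • u + f x • u) (hint₁.add hint₂) hint₃,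
      integral_add hint₁ hint₂, integral_smul, integral_smul,
      integral_id_eq_zero_of_map_neg (hσ_inv _), smul_zero, add_zero, smul_add, smul_smul,
      div_mul_cancel₀ _ hδ.ne', EuclideanSpace.card_smul_integral_inner_smul hσ hσ_inv]
  rw [hĝ, sub_add_cancel_right, norm_neg, norm_smul, Real.norm_of_nonneg (by positivity)]
  calc Fintype.card ι / δ * ‖∫ u, R u • u ∂σ‖ ≤ Fintype.card ι / δ * (M / 2 * δ ^ 2) := by gcongr
    _ = Fintype.card ι * δ * M / 2 := by field_simp

theorem norm_gradient_sub_gradient_sq_le [IsProbabilityMeasure σ] (hσ : ∀ᵐ u ∂σ, ‖u‖ = 1)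
    (hσ_inv : ∀ L : EuclideanSpace ℝ ι ≃ₗᵢ[ℝ] EuclideanSpace ℝ ι, σ.map L = σ)
    {f₁ f₂ : EuclideanSpace ℝ ι → ℝ} (hf₁ : Differentiable ℝ f₁) (hf₂ : Differentiable ℝ f₂)
    {M : ℝ} (hM₁ : ∀ a b, ‖fderiv ℝ f₁ a - fderiv ℝ f₁ b‖ ≤ M * ‖a - b‖)
    (hM₂ : ∀ a b, ‖fderiv ℝ f₂ a - fderiv ℝ f₂ b‖ ≤ M * ‖a - b‖) {δ : ℝ} (hδ : 0 < δ)
    (x : EuclideanSpace ℝ ι) :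
    ‖gradient f₁ x - gradient f₂ x‖ ^ 2 ≤
      3 / 2 * (Fintype.card ι : ℝ) ^ 2 * δ ^ 2 * M ^ 2 +
        3 * (Fintype.card ι : ℝ) ^ 2 / δ ^ 2 * ∫ u, (f₁ (x + δ • u) - f₂ (x + δ • u)) ^ 2 ∂σ := by
  set d : ℝ := (Fintype.card ι : ℝ)
  set ĝ₁ := smoothedGradient σ δ f₁ x
  set ĝ₂ := smoothedGradient σ δ f₂ x
  set a := d * δ * M / 2
  set A := ∫ u, |f₁ (x + δ • u) - f₂ (x + δ • u)| ∂σ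
  have hĝ : ‖ĝ₁ - ĝ₂‖ ≤ d / δ * A := by
    rw [← smoothedGradient_sub hσ hf₁.continuous hf₂.continuous]
    exact norm_smoothedGradient_le hσ hδ.le _ x
  have htri : ‖gradient f₁ x - gradient f₂ x‖ ≤ a + d / δ * A + a :=
    calc ‖gradient f₁ x - gradient f₂ x‖
        = ‖(gradient f₁ x - ĝ₁) + (ĝ₁ - ĝ₂) - (gradient f₂ x - ĝ₂)‖ := by congr 1; abel
      _ ≤ ‖gradient f₁ x - ĝ₁‖ + ‖ĝ₁ - ĝ₂‖ + ‖gradient f₂ x - ĝ₂‖ :=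
          norm_sub_le_of_le (norm_add_le _ _) le_rfl
      _ ≤ a + d / δ * A + a := by
          gcongr
          · exact norm_gradient_sub_smoothedGradient_le hσ hσ_inv hf₁ hM₁ hδ x
          · exact norm_gradient_sub_smoothedGradient_le hσ hσ_inv hf₂ hM₂ hδ x
  have hA : A ^ 2 ≤ ∫ u, (f₁ (x + δ • u) - f₂ (x + δ • u)) ^ 2 ∂σ := by
    have hφ : Continuous fun u : EuclideanSpace ℝ ι => f₁ (x + δ • u) - f₂ (x + δ • u) := by
      have := hf₁.continuous; have := hf₂.continuous; fun_prop
    simpa only [sq_abs] using sq_integral_le_integral_sq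
      (Continuous.integrable_of_ae_norm_eq_one hσ hφ.abs)
      (Continuous.integrable_of_ae_norm_eq_one hσ (hφ.abs.pow 2))
  calc ‖gradient f₁ x - gradient f₂ x‖ ^ 2 ≤ (a + d / δ * A + a) ^ 2 :=
        pow_le_pow_left₀ (norm_nonneg _) htri 2
    _ ≤ 3 * (a ^ 2 + (d / δ * A) ^ 2 + a ^ 2) := by nlinarith [sq_nonneg (a - d / δ * A)]
    _ = 3 / 2 * d ^ 2 * δ ^ 2 * M ^ 2 + 3 * d ^ 2 / δ ^ 2 * A ^ 2 := by
        simp only [a]; field_simp; ring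
    _ ≤ _ := by gcongr

end SmoothedGradient

theorem gradient_diff_sq_integral_bound_general {d : ℕ}
    (δ : ℝ) (hδ : 0 < δ) (M : ℝ)
    (σ : Measure (EuclideanSpace ℝ (Fin d))) [IsProbabilityMeasure σ]
    (hσ_sphere : ∀ᵐ u ∂σ, ‖u‖ = 1)
    (hσ_inv : ∀ L : EuclideanSpace ℝ (Fin d) ≃ₗᵢ[ℝ] EuclideanSpace ℝ (Fin d),
      σ.map L = σ)
    (μ : Measure (EuclideanSpace ℝ (Fin d))) [IsProbabilityMeasure μ]
    (vhat vstar : EuclideanSpace ℝ (Fin d) → ℝ)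
    (hvhat : ContDiff ℝ 2 vhat) (hvstar : ContDiff ℝ 2 vstar)
    (hvhat_range : ∀ x, vhat x ∈ Set.Icc (0 : ℝ) 1)
    (hvstar_range : ∀ x, vstar x ∈ Set.Icc (0 : ℝ) 1)
    (hvhat_hess : ∀ x, ‖fderiv ℝ (fun y => fderiv ℝ vhat y) x‖ ≤ M)
    (hvstar_hess : ∀ x, ‖fderiv ℝ (fun y => fderiv ℝ vstar y) x‖ ≤ M)
    (hint_sm : Integrable
      (fun x => ∫ u, (vhat (x + δ • u) - vstar (x + δ • u)) ^ 2 ∂σ) μ) :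
    ∫ x, ‖gradient vhat x - gradient vstar x‖ ^ 2 ∂μ ≤
      3 / 2 * (d : ℝ) ^ 2 * δ ^ 2 * M ^ 2 +
        3 * (d : ℝ) ^ 2 / δ ^ 2 *
          Real.sqrt (∫ x, ∫ u, (vhat (x + δ • u) - vstar (x + δ • u)) ^ 2 ∂σ ∂μ) := by
  set S := fun x => ∫ u, (vhat (x + δ • u) - vstar (x + δ • u)) ^ 2 ∂σ
  have hpointwise : ∀ x, ‖gradient vhat x - gradient vstar x‖ ^ 2 ≤
      3 / 2 * (d : ℝ) ^ 2 * δ ^ 2 * M ^ 2 + 3 * (d : ℝ) ^ 2 / δ ^ 2 * S x := fun x => by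
    simpa using norm_gradient_sub_gradient_sq_le hσ_sphere hσ_inv
      (hvhat.differentiable two_ne_zero) (hvstar.differentiable two_ne_zero)
      (norm_fderiv_sub_le_of_norm_fderiv_fderiv_le hvhat hvhat_hess)
      (norm_fderiv_sub_le_of_norm_fderiv_fderiv_le hvstar hvstar_hess) hδ x
  have hS : ∀ x, S x ≤ 1 := fun x => by
    refine (integral_mono_of_nonneg (ae_of_all _ fun _ => sq_nonneg _) (integrable_const 1)
      (ae_of_all _ fun u => ?_)).trans_eq (by simp)
    have h₁ := hvhat_range (x + δ • u)
    have h₂ := hvstar_range (x + δ • u)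
    nlinarith [h₁.1, h₁.2, h₂.1, h₂.2]
  have hI₀ : 0 ≤ ∫ x, S x ∂μ := integral_nonneg fun x => integral_nonneg fun u => sq_nonneg _
  have hI₁ : ∫ x, S x ∂μ ≤ 1 := (integral_mono hint_sm (integrable_const 1) hS).trans_eq (by simp)
  calc ∫ x, ‖gradient vhat x - gradient vstar x‖ ^ 2 ∂μ
      ≤ ∫ x, (3 / 2 * (d : ℝ) ^ 2 * δ ^ 2 * M ^ 2 + 3 * (d : ℝ) ^ 2 / δ ^ 2 * S x) ∂μ :=
        integral_mono_of_nonneg (ae_of_all _ fun _ => by positivity)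
          ((integrable_const _).add (hint_sm.const_mul _)) (ae_of_all _ hpointwise)
    _ = 3 / 2 * (d : ℝ) ^ 2 * δ ^ 2 * M ^ 2 + 3 * (d : ℝ) ^ 2 / δ ^ 2 * ∫ x, S x ∂μ := by
        rw [integral_add (integrable_const _) (hint_sm.const_mul _), integral_const,
          integral_const_mul]
        simp
    _ ≤ _ := by
        gcongr
        exact (Real.le_sqrt hI₀ hI₀).mpr (by nlinarith)

/-- expected squared gradient-difference bound via spherical smoothing.
Let `σ` be the uniform probability measure on the unit sphere `S^{d−1} ⊂ ℝ^d` (a probability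
measure supported on the sphere and invariant under every linear isometry), `μ` a probability
measure on `ℝ^d`, and `v̂, v* : ℝ^d → [0,1]` twice continuously differentiable with Hessian
operator norms bounded by `M`.  Assuming the integrals involved are finite,
`∫ ‖∇v̂ − ∇v*‖² dμ ≤ (3/2)d²δ²M² + (3d²/δ²)·√(∫∫ (v̂(x+δu) − v*(x+δu))² dσ(u) dμ(x))`. -/
theorem gradient_diff_sq_integral_bound {d : ℕ} (hd : 1 ≤ d)
    (δ : ℝ) (hδ : 0 < δ) (M : ℝ) (hM : 0 ≤ M)
    (σ : Measure (EuclideanSpace ℝ (Fin d))) [IsProbabilityMeasure σ]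
    (hσ_sphere : ∀ᵐ u ∂σ, ‖u‖ = 1)
    (hσ_inv : ∀ L : EuclideanSpace ℝ (Fin d) ≃ₗᵢ[ℝ] EuclideanSpace ℝ (Fin d),
      σ.map L = σ)
    (μ : Measure (EuclideanSpace ℝ (Fin d))) [IsProbabilityMeasure μ]
    (vhat vstar : EuclideanSpace ℝ (Fin d) → ℝ)
    (hvhat : ContDiff ℝ 2 vhat) (hvstar : ContDiff ℝ 2 vstar)
    (hvhat_range : ∀ x, vhat x ∈ Set.Icc (0 : ℝ) 1)
    (hvstar_range : ∀ x, vstar x ∈ Set.Icc (0 : ℝ) 1)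
    (hvhat_hess : ∀ x, ‖fderiv ℝ (fun y => fderiv ℝ vhat y) x‖ ≤ M)
    (hvstar_hess : ∀ x, ‖fderiv ℝ (fun y => fderiv ℝ vstar y) x‖ ≤ M)
    (hint_grad : Integrable (fun x => ‖gradient vhat x - gradient vstar x‖ ^ 2) μ)
    (hint_sm : Integrable
      (fun x => ∫ u, (vhat (x + δ • u) - vstar (x + δ • u)) ^ 2 ∂σ) μ) :
    ∫ x, ‖gradient vhat x - gradient vstar x‖ ^ 2 ∂μ ≤
      3 / 2 * (d : ℝ) ^ 2 * δ ^ 2 * M ^ 2 +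
        3 * (d : ℝ) ^ 2 / δ ^ 2 *
          Real.sqrt (∫ x, ∫ u, (vhat (x + δ • u) - vstar (x + δ • u)) ^ 2 ∂σ ∂μ) :=
  gradient_diff_sq_integral_bound_general δ hδ M σ hσ_sphere hσ_inv μ vhat vstar hvhat hvstar
    hvhat_range hvstar_range hvhat_hess hvstar_hess hint_sm
end
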